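/- arXiv:2207.13816 — 3 statements merged into one kernel-verified Lean document; each statement's English description precedes it below -/
import Mathlib

section
/- Let (L →δ₂ M →δ₁ N, { , }) be a 2-crossed module. Then the formula ᵐl := l·{δ₂(l)⁻¹, m} defines an action of M on L by group automorphisms, and δ₂ : L → M together with this action is a crossed module (i.e. δ₂(ᵐl) = m·δ₂(l)·m⁻¹ and ^{δ₂(l)}l' = l·l'·l⁻¹). -/
/-- In a 2-crossed module `L →δ₂ M →δ₁ N`, the formula
`ᵐl := l * {δ₂(l)⁻¹, m}` defines an action of `M` on `L` by group automorphisms, and `δ₂`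
together with this action is a crossed module. -/
theorem twoCrossedModule_peiffer_action_crossedModule
    {L M N : Type*} [Group L] [Group M] [Group N]
    (δ₂ : L →* M) (δ₁ : M →* N) (actL : N →* MulAut L) (actM : N →* MulAut M)
    (br : M → M → L)
    (chain : ∀ l : L, δ₁ (δ₂ l) = 1)
    (equivar₂ : ∀ (n : N) (l : L), δ₂ (actL n l) = actM n (δ₂ l))
    (equivar₁ : ∀ (n : N) (m : M), δ₁ (actM n m) = n * δ₁ m * n⁻¹)
    (axm1 : ∀ m₀ m₁ : M, δ₂ (br m₀ m₁) = m₀ * m₁ * m₀⁻¹ * actM (δ₁ m₀) m₁⁻¹)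
    (axm2 : ∀ l₀ l₁ : L, br (δ₂ l₀) (δ₂ l₁) = l₀ * l₁ * l₀⁻¹ * l₁⁻¹)
    (axm3 : ∀ (l : L) (m : M), br (δ₂ l) m * br m (δ₂ l) = l * actL (δ₁ m) l⁻¹)
    (axm4 : ∀ m₀ m₁ m₂ : M, br m₀ (m₁ * m₂) =
      br m₀ m₁ * br m₀ m₂ * br (δ₂ (br m₀ m₂))⁻¹ (actM (δ₁ m₀) m₁))
    (axm5 : ∀ m₀ m₁ m₂ : M, br (m₀ * m₁) m₂ =
      br m₀ (m₁ * m₂ * m₁⁻¹) * actL (δ₁ m₀) (br m₁ m₂))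
    (axm6 : ∀ (n : N) (m₀ m₁ : M), actL n (br m₀ m₁) = br (actM n m₀) (actM n m₁)) :
    ∀ φ : M → L → L, (φ = fun m l => l * br (δ₂ l)⁻¹ m) →
      (∀ (m : M) (l l' : L), φ m (l * l') = φ m l * φ m l') ∧
      (∀ l : L, φ 1 l = l) ∧
      (∀ (m m' : M) (l : L), φ (m * m') l = φ m (φ m' l)) ∧
      (∀ m : M, Function.Bijective (φ m)) ∧
      (∀ (m : M) (l : L), δ₂ (φ m l) = m * δ₂ l * m⁻¹) ∧
      (∀ l l' : L, φ (δ₂ l) l' = l * l' * l⁻¹) := by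
  intro φ hφ
  subst hφ
  -- δ₁ kills inverses of image elements too
  have h1n : ∀ l : L, δ₁ ((δ₂ l)⁻¹) = 1 := by
    intro l; rw [map_inv, chain, inv_one]
  -- fact1 : conjugation of m by an image element
  have fact1 : ∀ (v : L) (m : M), δ₂ v * m * (δ₂ v)⁻¹ = δ₂ (br (δ₂ v) m) * m := by
    intro v m
    rw [axm1, chain, map_one]
    simp only [MulAut.one_apply]
    group
  -- KEY lemma
  have hKEY : ∀ (a b : L) (m : M), br (δ₂ a) (δ₂ b * m * (δ₂ b)⁻¹) =
      a * br (δ₂ b) m * a⁻¹ * br (δ₂ a) m * (br (δ₂ b) m)⁻¹ := by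
    intro a b m
    rw [fact1 b m, axm4, chain, map_one]
    simp only [MulAut.one_apply]
    rw [axm2, ← map_inv δ₂, axm2]
    group
  have hone : ∀ l : L, l * br (δ₂ l)⁻¹ (1 : M) = l := by
    intro l
    have h := axm2 l⁻¹ 1
    rw [map_one] at h
    rw [← map_inv δ₂, h]
    group
  have hmul : ∀ (m : M) (l l' : L), l * l' * br (δ₂ (l * l'))⁻¹ m =
      (l * br (δ₂ l)⁻¹ m) * (l' * br (δ₂ l')⁻¹ m) := by
    intro m l l'
    have e1 : (δ₂ (l * l'))⁻¹ = δ₂ l'⁻¹ * δ₂ l⁻¹ := by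
      rw [map_mul, mul_inv_rev, map_inv, map_inv]
    rw [e1, axm5, chain, map_one]
    simp only [MulAut.one_apply]
    rw [hKEY l'⁻¹ l⁻¹ m, ← map_inv δ₂ l, ← map_inv δ₂ l']
    group
  have hcomp : ∀ (m m' : M) (l : L), l * br (δ₂ l)⁻¹ (m * m') =
      (l * br (δ₂ l)⁻¹ m') * br (δ₂ (l * br (δ₂ l)⁻¹ m'))⁻¹ m := by
    intro m m' l
    rw [axm4, h1n, map_one]
    simp only [MulAut.one_apply]
    rw [← map_inv δ₂ l]
    rw [map_mul, mul_inv_rev, ← map_inv δ₂ (br (δ₂ l⁻¹) m'), ← map_inv δ₂ l, axm5, chain, map_one]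
    simp only [MulAut.one_apply]
    rw [hKEY ((br (δ₂ l⁻¹) m')⁻¹) l⁻¹ m]
    group
  refine ⟨hmul, hone, hcomp, ?_, ?_, ?_⟩
  · intro m
    refine Function.bijective_iff_has_inverse.mpr ⟨fun l => l * br (δ₂ l)⁻¹ m⁻¹, ?_, ?_⟩
    · intro l
      simp only
      rw [← hcomp m⁻¹ m l, inv_mul_cancel, hone]
    · intro l
      simp only
      rw [← hcomp m m⁻¹ l, mul_inv_cancel, hone]
  · intro m l
    simp only
    rw [map_mul, ← map_inv δ₂ l, axm1, chain, map_one]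
    simp only [MulAut.one_apply]
    rw [map_inv]
    group
  · intro l l'
    simp only
    rw [← map_inv δ₂ l', axm2]
    group
end

section
/- Let 𝕏 be a semi-abelian category and let (𝒮, 𝒢) ≤ (𝒯, ℱ) be torsion theories in 𝕏 (i.e. 𝒮 ⊆ 𝒯). For an object X denote by 0 → T(X) →t_X X →f_X F(X) → 0 and 0 → S(X) →s_X X →g_X G(X) → 0 the short exact sequences associated to (𝒯, ℱ) and (𝒮, 𝒢) respectively. Then the pair (𝒯, 𝒢) is a 𝒵-pretorsion theory in 𝕏 with class of trivial objects 𝒵 = 𝒯 ∩ 𝒢, and for each object X the sequence T(X) →t_X X →g_X G(X) is a short 𝒵-preexact sequence. -/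
/-!
Since `𝒮 ⊆ 𝒯`, the map `s_X` is killed by `f_X`, so `f_X` factors through `g_X` and `s_X`
factors through `t_X`. Quotients of torsion objects are torsion, so a morphism from an object
of `𝒯` to an object of `𝒢` factors through its `𝒢`-reflection, which lies in `𝒵 = 𝒯 ∩ 𝒢`.
If `x ≫ g_X` factors through `𝒵 ⊆ 𝒯`, then `x ≫ f_X` is zero because `f_X` factors through
`g_X`, so `x` factors through the kernel `t_X`; dually, if `t_X ≫ y` factors through
`𝒵 ⊆ 𝒢`, then `s_X ≫ y` is zero and `y` factors through the cokernel `g_X`.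
-/

open CategoryTheory CategoryTheory.Limits

universe v u

variable {C : Type u} [Category.{v} C]

/-- A pair of composable morphisms is a short exact sequence if the composite is zero,
the first morphism is a kernel of the second and the second is a cokernel of the first. -/
def IsShortExact [HasZeroMorphisms C] {A X B : C} (i : A ⟶ X) (p : X ⟶ B) : Prop :=
  ∃ w : i ≫ p = 0,
    Nonempty (IsLimit (KernelFork.ofι i w)) ∧ Nonempty (IsColimit (CokernelCofork.ofπ p w))

/-- A torsion theory: a pair of full replete subcategories (given as predicates on objects)
such that every morphism from a torsion object to a torsion-free object is zero, and every
object fits in a short exact sequence with torsion kernel part and torsion-free cokernel part. -/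
structure IsTorsionTheory [HasZeroMorphisms C] (T F : C → Prop) : Prop where
  t_replete : ∀ {X Y : C}, (X ≅ Y) → T X → T Y
  f_replete : ∀ {X Y : C}, (X ≅ Y) → F X → F Y
  hom_zero : ∀ {X Y : C} (f : X ⟶ Y), T X → F Y → f = 0
  exists_seq : ∀ X : C, ∃ (TX FX : C) (i : TX ⟶ X) (p : X ⟶ FX),
    T TX ∧ F FX ∧ IsShortExact i p

/-- A torsion theory relative to a class `E` of objects: TT1 holds for all objects, while the
short exact sequence is only required for objects of `E`. -/
structure IsRelTorsionTheory [HasZeroMorphisms C] (E T F : C → Prop) : Prop where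
  hom_zero : ∀ {X Y : C} (f : X ⟶ Y), T X → F Y → f = 0
  exists_seq : ∀ X : C, E X → ∃ (TX FX : C) (i : TX ⟶ X) (p : X ⟶ FX),
    T TX ∧ F FX ∧ IsShortExact i p

/-- A TTF (torsion torsion-free) theory: a triple of full subcategories whose two consecutive
pairs are torsion theories. -/
def IsTTF [HasZeroMorphisms C] (Cc T F : C → Prop) : Prop :=
  IsTorsionTheory Cc T ∧ IsTorsionTheory T F

/-- A semi-abelian category: pointed (zero object and zero morphisms), with binary coproducts,
Barr-exact (regular: finite limits, coequalizers of kernel pairs, pullback-stable regular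
epimorphisms; and every internal equivalence relation is a kernel pair) and Bourn protomodular
(the split short five lemma holds). -/
structure IsSemiAbelian (C : Type u) [Category.{v} C] [HasZeroMorphisms C] : Prop where
  hasZeroObject : HasZeroObject C
  hasBinaryCoproducts : HasBinaryCoproducts C
  hasFiniteLimits : HasFiniteLimits C
  hasCoequalizersOfKernelPairs :
    ∀ {X Y R : C} (f : X ⟶ Y) (p₁ p₂ : R ⟶ X) (w : p₁ ≫ f = p₂ ≫ f),
      Nonempty (IsLimit (PullbackCone.mk p₁ p₂ w)) → HasCoequalizer p₁ p₂
  regularEpiStable :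
    ∀ {X Y Z P : C} (f : X ⟶ Y) (g : Z ⟶ Y) (p₁ : P ⟶ X) (p₂ : P ⟶ Z) (w : p₁ ≫ f = p₂ ≫ g),
      Nonempty (IsLimit (PullbackCone.mk p₁ p₂ w)) → Nonempty (RegularEpi f) →
        Nonempty (RegularEpi p₂)
  equivalenceRelationsEffective :
    ∀ {R X : C} (p₁ p₂ : R ⟶ X),
      (∀ {W : C} (a b : W ⟶ R), a ≫ p₁ = b ≫ p₁ → a ≫ p₂ = b ≫ p₂ → a = b) →
      (∃ r : X ⟶ R, r ≫ p₁ = 𝟙 X ∧ r ≫ p₂ = 𝟙 X) →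
      (∃ s : R ⟶ R, s ≫ p₁ = p₂ ∧ s ≫ p₂ = p₁) →
      (∀ {P : C} (q₁ q₂ : P ⟶ R) (w : q₁ ≫ p₂ = q₂ ≫ p₁),
        Nonempty (IsLimit (PullbackCone.mk q₁ q₂ w)) →
          ∃ t : P ⟶ R, t ≫ p₁ = q₁ ≫ p₁ ∧ t ≫ p₂ = q₂ ≫ p₂) →
      ∃ (Y : C) (q : X ⟶ Y) (w : p₁ ≫ q = p₂ ≫ q),
        Nonempty (IsLimit (PullbackCone.mk p₁ p₂ w))
  splitShortFiveLemma :
    ∀ {K X Y K' X' Y' : C} (k : K ⟶ X) (f : X ⟶ Y) (s : Y ⟶ X)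
      (k' : K' ⟶ X') (f' : X' ⟶ Y') (s' : Y' ⟶ X')
      (α : K ⟶ K') (β : X ⟶ X') (γ : Y ⟶ Y'),
      s ≫ f = 𝟙 Y → s' ≫ f' = 𝟙 Y' →
      IsShortExact k f → IsShortExact k' f' →
      k ≫ β = α ≫ k' → f ≫ γ = β ≫ f' →
      IsIso α → IsIso γ → IsIso β

/-- Zero morphisms on a full subcategory, induced by those of the ambient category. -/
instance (Z : C → Prop) [HasZeroMorphisms C] : HasZeroMorphisms (ObjectProperty.FullSubcategory Z) where
  zero X Y := ⟨ObjectProperty.homMk (P := Z) (0 : X.obj ⟶ Y.obj)⟩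
  comp_zero {_X _Y} f Z' := by ext; exact Limits.comp_zero (C := C) (f := f.hom) (Z := Z'.obj)
  zero_comp X {_Y _Z'} f := by ext; exact Limits.zero_comp (C := C) (X := X.obj) (f := f.hom)

/-- A morphism is `𝒵`-trivial if it factors through an object of the class `Z`. -/
def ZTrivial (Z : C → Prop) {X Y : C} (f : X ⟶ Y) : Prop :=
  ∃ (W : C) (u : X ⟶ W) (v : W ⟶ Y), Z W ∧ u ≫ v = f

/-- `k` is a `𝒵`-prekernel of `f`: `k ≫ f` is `𝒵`-trivial, and every morphism `x` with
`x ≫ f` `𝒵`-trivial factors uniquely through `k`. -/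
def IsZPrekernel (Z : C → Prop) {K A B : C} (k : K ⟶ A) (f : A ⟶ B) : Prop :=
  ZTrivial Z (k ≫ f) ∧
    ∀ {X : C} (x : X ⟶ A), ZTrivial Z (x ≫ f) → ∃! l : X ⟶ K, l ≫ k = x

/-- `q` is a `𝒵`-precokernel of `f`: `f ≫ q` is `𝒵`-trivial, and every morphism `y` with
`f ≫ y` `𝒵`-trivial factors uniquely through `q`. -/
def IsZPrecokernel (Z : C → Prop) {A B Q : C} (f : A ⟶ B) (q : B ⟶ Q) : Prop :=
  ZTrivial Z (f ≫ q) ∧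
    ∀ {Y : C} (y : B ⟶ Y), ZTrivial Z (f ≫ y) → ∃! l : Q ⟶ Y, q ≫ l = y

/-- A short `𝒵`-preexact sequence. -/
def ZPreexact (Z : C → Prop) {T X F : C} (t : T ⟶ X) (g : X ⟶ F) : Prop :=
  IsZPrekernel Z t g ∧ IsZPrecokernel Z t g

/-- A `𝒵`-pretorsion theory with `𝒵 = 𝕋 ∩ 𝔽`: every morphism from `𝕋` to `𝔽` is
`𝒵`-trivial, and every object fits in a short `𝒵`-preexact sequence. -/
structure IsPretorsionTheory (TT FF : C → Prop) : Prop where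
  ztrivial_hom : ∀ {X Y : C} (f : X ⟶ Y), TT X → FF Y →
    ZTrivial (fun W => TT W ∧ FF W) f
  exists_seq : ∀ X : C, ∃ (TX FX : C) (t : TX ⟶ X) (g : X ⟶ FX),
    TT TX ∧ FF FX ∧ ZPreexact (fun W => TT W ∧ FF W) t g

namespace ZTrivial

variable {Z : C → Prop} {X Y : C} {f : X ⟶ Y}

lemma precomp (hf : ZTrivial Z f) {X' : C} (a : X' ⟶ X) : ZTrivial Z (a ≫ f) := by
  obtain ⟨W, u, v, hW, rfl⟩ := hf
  exact ⟨W, a ≫ u, v, hW, Category.assoc _ _ _⟩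

lemma postcomp (hf : ZTrivial Z f) {Y' : C} (b : Y ⟶ Y') : ZTrivial Z (f ≫ b) := by
  obtain ⟨W, u, v, hW, rfl⟩ := hf
  exact ⟨W, u, v ≫ b, hW, (Category.assoc _ _ _).symm⟩

variable [HasZeroMorphisms C]

lemma eq_zero_of_target (hf : ZTrivial Z f) (hY : ∀ {W : C} (v : W ⟶ Y), Z W → v = 0) :
    f = 0 := by
  obtain ⟨W, u, v, hW, rfl⟩ := hf
  rw [hY v hW, comp_zero]

lemma eq_zero_of_source (hf : ZTrivial Z f) (hX : ∀ {W : C} (u : X ⟶ W), Z W → u = 0) :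
    f = 0 := by
  obtain ⟨W, u, v, hW, rfl⟩ := hf
  rw [hX u hW, zero_comp]

end ZTrivial

section

variable [HasZeroMorphisms C]

namespace IsShortExact

variable {A X B : C} {i : A ⟶ X} {p : X ⟶ B}

lemma existsUnique_lift (h : IsShortExact i p) {W : C} (x : W ⟶ X) (hx : x ≫ p = 0) :
    ∃! l : W ⟶ A, l ≫ i = x := by
  obtain ⟨_, ⟨hk⟩, _⟩ := h
  exact Fork.IsLimit.existsUnique hk x (by simpa using hx)

lemma existsUnique_desc (h : IsShortExact i p) {Y : C} (y : X ⟶ Y) (hy : i ≫ y = 0) :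
    ∃! l : B ⟶ Y, p ≫ l = y := by
  obtain ⟨_, _, ⟨hc⟩⟩ := h
  exact Cofork.IsColimit.existsUnique hc y (by simpa using hy)

lemma mono (h : IsShortExact i p) : Mono i := by
  obtain ⟨_, ⟨hk⟩, _⟩ := h
  exact Fork.IsLimit.mono hk

lemma epi (h : IsShortExact i p) : Epi p := by
  obtain ⟨_, _, ⟨hc⟩⟩ := h
  exact Cofork.IsColimit.epi hc

end IsShortExact

lemma IsTorsionTheory.torsion_of_epi {T F : C → Prop} (hTF : IsTorsionTheory T F)
    {X Y : C} (p : X ⟶ Y) [Epi p] (hX : T X) : T Y := by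
  obtain ⟨TY, FY, i, q, hTY, hFY, hiq⟩ := hTF.exists_seq Y
  have hq : q = 0 := by
    rw [← cancel_epi p, comp_zero]
    exact hTF.hom_zero _ hX hFY
  obtain ⟨j, hj, -⟩ := hiq.existsUnique_lift (𝟙 Y) (by rw [hq, comp_zero])
  have := hiq.mono
  have hij : i ≫ j = 𝟙 TY := by
    rw [← cancel_mono i, Category.assoc, hj, Category.id_comp, Category.comp_id]
  exact hTF.t_replete ⟨i, j, hij, hj⟩ hTY

section TwoTorsionTheories

variable {S G T F : C → Prop}

lemma zTrivial_of_torsion_of_torsionFree (hTF : IsTorsionTheory T F)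
    (hSG : IsTorsionTheory S G) {X Y : C} (f : X ⟶ Y) (hX : T X) (hY : G Y) :
    ZTrivial (fun W => T W ∧ G W) f := by
  obtain ⟨SX, GX, s, g, hSX, hGX, hsg⟩ := hSG.exists_seq X
  obtain ⟨φ, hφ, -⟩ := hsg.existsUnique_desc f (hSG.hom_zero _ hSX hY)
  have := hsg.epi
  exact ⟨GX, g, φ, ⟨hTF.torsion_of_epi g hX, hGX⟩, hφ⟩

variable (hTF : IsTorsionTheory T F) (hSG : IsTorsionTheory S G) (hle : ∀ X : C, S X → T X)
  {X TX FX SX GX : C} {t : TX ⟶ X} {f : X ⟶ FX} {s : SX ⟶ X} {g : X ⟶ GX}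
  (hT : T TX) (hF : F FX) (hS : S SX) (hG : G GX)
  (htf : IsShortExact t f) (hsg : IsShortExact s g)
include hTF hSG hle hT hF hS hG htf hsg

lemma isZPrekernel_of_isShortExact : IsZPrekernel (fun W => T W ∧ G W) t g := by
  refine ⟨zTrivial_of_torsion_of_torsionFree hTF hSG _ hT hG, fun x hx => ?_⟩
  obtain ⟨φ, hφ, -⟩ := hsg.existsUnique_desc f (hTF.hom_zero _ (hle _ hS) hF)
  have hxf : x ≫ f = 0 := by
    rw [← hφ, ← Category.assoc]
    exact (hx.postcomp φ).eq_zero_of_target fun v hW => hTF.hom_zero v hW.1 hF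
  exact htf.existsUnique_lift x hxf

lemma isZPrecokernel_of_isShortExact : IsZPrecokernel (fun W => T W ∧ G W) t g := by
  refine ⟨zTrivial_of_torsion_of_torsionFree hTF hSG _ hT hG, fun y hy => ?_⟩
  obtain ⟨σ, hσ, -⟩ := htf.existsUnique_lift s (hTF.hom_zero _ (hle _ hS) hF)
  have hsy : s ≫ y = 0 := by
    rw [← hσ, Category.assoc]
    exact (hy.precomp σ).eq_zero_of_source fun u hW => hSG.hom_zero u hS hW.2
  exact hsg.existsUnique_desc y hsy

lemma zPreexact_of_isShortExact : ZPreexact (fun W => T W ∧ G W) t g :=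
  ⟨isZPrekernel_of_isShortExact hTF hSG hle hT hF hS hG htf hsg,
    isZPrecokernel_of_isShortExact hTF hSG hle hT hF hS hG htf hsg⟩

end TwoTorsionTheories

end

theorem pretorsion_from_two_torsion_theories_general [HasZeroMorphisms C]
    {S G T F : C → Prop}
    (hTF : IsTorsionTheory T F) (hSG : IsTorsionTheory S G)
    (hle : ∀ X : C, S X → T X) :
    IsPretorsionTheory T G ∧
    ∀ (X TX FX SX GX : C) (t : TX ⟶ X) (f : X ⟶ FX) (s : SX ⟶ X) (g : X ⟶ GX),
      T TX → F FX → S SX → G GX → IsShortExact t f → IsShortExact s g →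
      ZPreexact (fun W => T W ∧ G W) t g := by
  refine ⟨⟨zTrivial_of_torsion_of_torsionFree hTF hSG, fun X => ?_⟩,
    fun _ _ _ _ _ _ _ _ _ => zPreexact_of_isShortExact hTF hSG hle⟩
  obtain ⟨TX, FX, t, f, hT, hF, htf⟩ := hTF.exists_seq X
  obtain ⟨SX, GX, s, g, hS, hG, hsg⟩ := hSG.exists_seq X
  exact ⟨TX, GX, t, g, hT, hG, zPreexact_of_isShortExact hTF hSG hle hT hF hS hG htf hsg⟩

/-- Let `𝕏` be semi-abelian with torsion theories
`(𝒮, 𝒢) ≤ (𝒯, ℱ)`.  Then `(𝒯, 𝒢)` is a `𝒵`-pretorsion theory with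
`𝒵 = 𝒯 ∩ 𝒢`, and for every object `X` the sequence `T(X) → X → G(X)` obtained from the
two associated short exact sequences is short `𝒵`-preexact. -/
theorem pretorsion_from_two_torsion_theories [HasZeroMorphisms C]
    (hC : IsSemiAbelian C) {S G T F : C → Prop}
    (hTF : IsTorsionTheory T F) (hSG : IsTorsionTheory S G)
    (hle : ∀ X : C, S X → T X) :
    IsPretorsionTheory T G ∧
    ∀ (X TX FX SX GX : C) (t : TX ⟶ X) (f : X ⟶ FX) (s : SX ⟶ X) (g : X ⟶ GX),
      T TX → F FX → S SX → G GX → IsShortExact t f → IsShortExact s g →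
      ZPreexact (fun W => T W ∧ G W) t g :=
  pretorsion_from_two_torsion_theories_general hTF hSG hle
end

section
/- Let 𝕏 be a semi-abelian category and 𝒜 a full replete subcategory whose inclusion I : 𝒜 → 𝕏 has a left adjoint F such that every component of the unit η_X : X → IF(X) is a normal epimorphism. Let Ker(F) = {X ∈ 𝕏 : F(X) ≅ 0} and let ℰ = {X ∈ 𝕏 : F(ker(η_X)) ≅ 0}. Then the pair (Ker(F), 𝒜) is an ℰ-torsion theory in 𝕏. -/
open CategoryTheory CategoryTheory.Limits

universe v u

variable {C : Type u} [Category.{v} C]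

/-! A morphism into an object of `A` factors through the unit, so it vanishes on any `X` with
`F X ≅ 0`. For `X` in `ℰ` the kernel `K` of `η X` has `F K ≅ 0`, and `η X`, being a normal
epimorphism, is the cokernel of its kernel; so `K → X → F X` is the required exact sequence. -/

namespace CategoryTheory

def NormalEpi.isColimitOfIsLimitKernelFork [HasZeroMorphisms C] {K X Y : C} {k : K ⟶ X}
    {p : X ⟶ Y} (hp : NormalEpi p) (w : k ≫ p = 0) (hk : IsLimit (KernelFork.ofι k w)) :
    IsColimit (CokernelCofork.ofπ p w) :=
  CokernelCofork.isColimitOfIsColimitOfIff' hp.isColimit k fun _ φ =>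
    ⟨fun h => by
      obtain ⟨ψ, rfl⟩ := CokernelCofork.IsColimit.desc' hp.isColimit φ h
      rw [Cofork.π_ofπ, ← Category.assoc, w, zero_comp],
    fun h => by
      obtain ⟨l, hl⟩ := KernelFork.IsLimit.lift' hk hp.g hp.w
      rw [← hl, Category.assoc, KernelFork.ι_ofι, h, comp_zero]⟩

end CategoryTheory

theorem isShortExact_of_isLimit_of_normalEpi [HasZeroMorphisms C] {K X Y : C} {k : K ⟶ X}
    {p : X ⟶ Y} (hp : NormalEpi p) (w : k ≫ p = 0) (hk : IsLimit (KernelFork.ofι k w)) :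
    IsShortExact k p :=
  ⟨w, ⟨hk⟩, ⟨hp.isColimitOfIsLimitKernelFork w hk⟩⟩

theorem normal_epireflective_relTorsionTheory_general [HasZeroMorphisms C]
    (A : C → Prop)
    (F : C → C) (η : ∀ X : C, X ⟶ F X)
    (hF : ∀ X : C, A (F X))
    (hη : ∀ X : C, Nonempty (NormalEpi (η X)))
    (huniv : ∀ (X Y : C), A Y → ∀ f : X ⟶ Y, ∃! g : F X ⟶ Y, η X ≫ g = f) :
    IsRelTorsionTheory
      (fun X => ∃ (K : C) (k : K ⟶ X) (w : k ≫ η X = 0),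
        Nonempty (IsLimit (KernelFork.ofι k w)) ∧ IsZero (F K))
      (fun X => IsZero (F X)) A := by
  constructor
  · intro X Y f hX hY
    obtain ⟨g, rfl, -⟩ := huniv X Y hY f
    rw [hX.eq_of_src g 0, comp_zero]
  · rintro X ⟨K, k, w, ⟨hk⟩, hK⟩
    exact ⟨K, F X, k, η X, hK, hF X, isShortExact_of_isLimit_of_normalEpi (hη X).some w hk⟩

/-- Let `𝕏` be semi-abelian and `𝒜` a full replete subcategory whose
inclusion has a left adjoint `F` (encoded pointwise by its reflections) such that every
unit component `η_X : X → F(X)` is a normal epimorphism.  With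
`Ker(F) = {X ∣ F(X) ≅ 0}` and `ℰ = {X ∣ F(ker η_X) ≅ 0}`, the pair `(Ker(F), 𝒜)` is an
`ℰ`-torsion theory in `𝕏`. -/
theorem normal_epireflective_relTorsionTheory [HasZeroMorphisms C]
    (hC : IsSemiAbelian C) (A : C → Prop)
    (hA_replete : ∀ {X Y : C}, (X ≅ Y) → A X → A Y)
    (F : C → C) (η : ∀ X : C, X ⟶ F X)
    (hF : ∀ X : C, A (F X))
    (hη : ∀ X : C, Nonempty (NormalEpi (η X)))
    (huniv : ∀ (X Y : C), A Y → ∀ f : X ⟶ Y, ∃! g : F X ⟶ Y, η X ≫ g = f) :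
    IsRelTorsionTheory
      (fun X => ∃ (K : C) (k : K ⟶ X) (w : k ≫ η X = 0),
        Nonempty (IsLimit (KernelFork.ofι k w)) ∧ IsZero (F K))
      (fun X => IsZero (F X)) A :=
  normal_epireflective_relTorsionTheory_general A F η hF hη huniv
end
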